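/- Let G and G' be two vertex-disjoint graphs, each with at least two vertices, let v be a vertex of G and v' a vertex of G', and let G'' be the graph obtained from the disjoint union of G and G' by adding the edge vv'. Then: (i) a set S'' of vertices of G'' is a type I set for v' in G'' with L_{S''}(v') = 1 if and only if S'' = S ∪ S' where S = S'' ∩ V(G) is a type I set for v in G, S' = S'' ∩ V(G') is a type I set for v' in G', and the pair (L_S(v), L_{S'}(v')) belongs to {(0,−2), (0,−1), (1,1), (2,1)}; (ii) moreover, if R ⊆ V(G) is a type I set for v in G with L_R(v) = −1 and S' ⊆ V(G') is a type I set for v' in G' with L_{S'}(v') ∈ {−2, −1}, then S'' = (R ∪ {v}) ∪ S' is a type I set for v' in G'' with L_{S''}(v') = 1. -/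

import Mathlib

/-- A set of vertices is independent: no two of its vertices are adjacent. -/
def IndepSet {V : Type*} (G : SimpleGraph V) (S : Set V) : Prop :=
  ∀ u ∈ S, ∀ w ∈ S, ¬ G.Adj u w

/-- `S` is a type I set for `v` in `G`: `S` is independent, every vertex
`u ∉ S ∪ {v}` has at least one and at most two neighbors in `S`, and `v` either
belongs to `S` or has at most two neighbors in `S`. -/
def TypeISet {V : Type*} (G : SimpleGraph V) (v : V) (S : Set V) : Prop :=
  IndepSet G S ∧
    (∀ u, u ∉ S → u ≠ v →
      1 ≤ (S ∩ G.neighborSet u).ncard ∧ (S ∩ G.neighborSet u).ncard ≤ 2) ∧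
    (v ∈ S ∨ (S ∩ G.neighborSet v).ncard ≤ 2)

/-- The labeling `L_S(v) = l` : `0` if `v ∈ S`; `k ≥ 1` if `v ∉ S` and `v` has exactly
`k` neighbors in `S`; `-1` if `N[v] ∩ S = ∅` and every neighbor of `v` has exactly one
neighbor in `S`; `-2` if `N[v] ∩ S = ∅` and some neighbor of `v` has exactly two
neighbors in `S`. -/
def HasLabel {V : Type*} (G : SimpleGraph V) (v : V) (S : Set V) (l : ℤ) : Prop :=
  (v ∈ S ∧ l = 0) ∨
  (v ∉ S ∧ ∃ k : ℕ, 1 ≤ k ∧ (S ∩ G.neighborSet v).ncard = k ∧ l = (k : ℤ)) ∨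
  (v ∉ S ∧ S ∩ G.neighborSet v = ∅ ∧
    (∀ u ∈ G.neighborSet v, (S ∩ G.neighborSet u).ncard = 1) ∧ l = -1) ∨
  (v ∉ S ∧ S ∩ G.neighborSet v = ∅ ∧
    (∃ u ∈ G.neighborSet v, (S ∩ G.neighborSet u).ncard = 2) ∧ l = -2)

/-- The star `K_{1,r}` with center `none` and the `r` leaves `some i`. -/
def starGraph (r : ℕ) : SimpleGraph (Option (Fin r)) where
  Adj a b := (a = none ∧ b ≠ none) ∨ (a ≠ none ∧ b = none)
  symm := by constructor; intro a b h; tauto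
  loopless := by constructor; intro a h; tauto

/-- The graph obtained from `G` by adding a new vertex `none` adjacent only to `v`. -/
def addLeaf {V : Type*} (G : SimpleGraph V) (v : V) : SimpleGraph (Option V) where
  Adj a b := match a, b with
    | some x, some y => G.Adj x y
    | none, some y => y = v
    | some x, none => x = v
    | none, none => False
  symm := by
    constructor
    intro a b h
    match a, b with
    | some x, some y => exact h.symm
    | none, some y => exact h
    | some x, none => exact h
    | none, none => exact h
  loopless := by
    constructor
    intro a h
    match a with
    | some x => exact G.loopless.irrefl x h
    | none => exact h

/-- The graph obtained from the disjoint union of `G` and `H` by adding the edge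
between `v` (in `G`) and `v'` (in `H`). -/
def joinAt {V W : Type*} (G : SimpleGraph V) (H : SimpleGraph W) (v : V) (v' : W) :
    SimpleGraph (V ⊕ W) where
  Adj a b := match a, b with
    | Sum.inl x, Sum.inl y => G.Adj x y
    | Sum.inr x, Sum.inr y => H.Adj x y
    | Sum.inl x, Sum.inr y => x = v ∧ y = v'
    | Sum.inr x, Sum.inl y => x = v' ∧ y = v
  symm := by
    constructor
    intro a b h
    match a, b with
    | Sum.inl x, Sum.inl y => exact h.symm
    | Sum.inr x, Sum.inr y => exact h.symm
    | Sum.inl x, Sum.inr y => exact ⟨h.2, h.1⟩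
    | Sum.inr x, Sum.inl y => exact ⟨h.2, h.1⟩
  loopless := by
    constructor
    intro a h
    match a with
    | Sum.inl x => exact G.loopless.irrefl x h
    | Sum.inr x => exact H.loopless.irrefl x h


/-! Only the edge `vv'` joins the two sides, so a vertex of `G''` has as many neighbours in
`S ∪ S'` as in its own side, plus one exactly when it is an endpoint of `vv'` whose other
endpoint lies in the set. Hence `L_{S''}(v') = 1` says that `v'` receives exactly one
neighbour: either `v ∈ S` and none from `S'` (so `L_{S'}(v')` is negative), or `v ∉ S` and
exactly one from `S'`, in which case `v` must still be dominated once or twice inside `G`.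
For (ii), adding `v` to `R` keeps a type I set because every neighbour of `v` had exactly one
neighbour in `R`. -/

open Set

section Labels

variable {V : Type*} {G : SimpleGraph V} {v : V} {S : Set V}

lemma hasLabel_zero_iff : HasLabel G v S 0 ↔ v ∈ S := by
  refine ⟨?_, fun h => Or.inl ⟨h, rfl⟩⟩
  rintro (⟨h, -⟩ | ⟨-, k, hk, -, h⟩ | ⟨-, -, -, h⟩ | ⟨-, -, -, h⟩)
  · exact h
  all_goals omega

lemma hasLabel_iff_of_pos {l : ℤ} (hl : 0 < l) :
    HasLabel G v S l ↔ v ∉ S ∧ ((S ∩ G.neighborSet v).ncard : ℤ) = l := by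
  constructor
  · rintro (⟨-, h⟩ | ⟨hv, k, -, hk, h⟩ | ⟨-, -, -, h⟩ | ⟨-, -, -, h⟩)
    · omega
    · exact ⟨hv, by omega⟩
    all_goals omega
  · rintro ⟨hv, h⟩
    exact Or.inr (Or.inl ⟨hv, _, by omega, rfl, h.symm⟩)

lemma hasLabel_neg_one_iff :
    HasLabel G v S (-1) ↔ v ∉ S ∧ S ∩ G.neighborSet v = ∅ ∧
      ∀ u ∈ G.neighborSet v, (S ∩ G.neighborSet u).ncard = 1 := by
  constructor
  · rintro (⟨-, h⟩ | ⟨-, k, -, -, h⟩ | ⟨hv, he, h1, -⟩ | ⟨-, -, -, h⟩)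
    all_goals first | omega | exact ⟨hv, he, h1⟩
  · rintro ⟨hv, he, h1⟩
    exact Or.inr (Or.inr (Or.inl ⟨hv, he, h1, rfl⟩))

lemma hasLabel_neg_two_iff :
    HasLabel G v S (-2) ↔ v ∉ S ∧ S ∩ G.neighborSet v = ∅ ∧
      ∃ u ∈ G.neighborSet v, (S ∩ G.neighborSet u).ncard = 2 := by
  constructor
  · rintro (⟨-, h⟩ | ⟨-, k, -, -, h⟩ | ⟨-, -, -, h⟩ | ⟨hv, he, h2, -⟩)
    all_goals first | omega | exact ⟨hv, he, h2⟩
  · rintro ⟨hv, he, h2⟩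
    exact Or.inr (Or.inr (Or.inr ⟨hv, he, h2, rfl⟩))

lemma TypeISet.hasLabel_neg_two_or_neg_one_iff (hS : TypeISet G v S) :
    HasLabel G v S (-2) ∨ HasLabel G v S (-1) ↔ v ∉ S ∧ S ∩ G.neighborSet v = ∅ := by
  rw [hasLabel_neg_two_iff, hasLabel_neg_one_iff]
  refine ⟨by rintro (⟨hv, he, -⟩ | ⟨hv, he, -⟩) <;> exact ⟨hv, he⟩, fun ⟨hv, he⟩ => ?_⟩
  by_cases hall : ∀ u ∈ G.neighborSet v, (S ∩ G.neighborSet u).ncard = 1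
  · exact Or.inr ⟨hv, he, hall⟩
  push Not at hall
  obtain ⟨u, hu, hne⟩ := hall
  have huS : u ∉ S := fun h => (eq_empty_iff_forall_notMem.1 he u) ⟨h, hu⟩
  have := hS.2.1 u huS (G.ne_of_adj hu).symm
  exact Or.inl ⟨hv, he, u, hu, by omega⟩

lemma TypeISet.insert_of_hasLabel_neg_one [Finite V] (hS : TypeISet G v S)
    (hl : HasLabel G v S (-1)) : TypeISet G v (insert v S) := by
  obtain ⟨hv, he, hnbr⟩ := hasLabel_neg_one_iff.1 hl
  have hvS (u : V) (hu : u ∈ S) (huv : G.Adj v u) : False :=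
    eq_empty_iff_forall_notMem.1 he u ⟨hu, huv⟩
  refine ⟨?_, fun u hu huv => ?_, Or.inl (mem_insert v S)⟩
  · rintro a (rfl | ha) b (rfl | hb) hab
    · exact G.loopless.irrefl _ hab
    · exact hvS b hb hab
    · exact hvS a ha hab.symm
    · exact hS.1 a ha b hb hab
  · have huS : u ∉ S := fun h => hu (mem_insert_of_mem v h)
    by_cases hadj : G.Adj u v
    · rw [insert_inter_of_mem (t := G.neighborSet u) hadj, ncard_insert_of_notMem fun h => hv h.1,
        hnbr u hadj.symm]
      omega
    · rw [insert_inter_of_notMem (t := G.neighborSet u) hadj]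
      exact hS.2.1 u huS huv

lemma typeISet_and_ncard_bounds_iff :
    TypeISet G v S ∧
        (v ∉ S → 1 ≤ (S ∩ G.neighborSet v).ncard ∧ (S ∩ G.neighborSet v).ncard ≤ 2) ↔
      IndepSet G S ∧
        ∀ u ∉ S, 1 ≤ (S ∩ G.neighborSet u).ncard ∧ (S ∩ G.neighborSet u).ncard ≤ 2 := by
  constructor
  · rintro ⟨⟨hS, hc, -⟩, hv⟩
    refine ⟨hS, fun u hu => ?_⟩
    obtain rfl | huv := eq_or_ne u v
    exacts [hv hu, hc u hu huv]
  · rintro ⟨hS, hc⟩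
    exact ⟨⟨hS, fun u hu _ => hc u hu, (em (v ∈ S)).imp_right fun hv => (hc v hv).2⟩, hc v⟩

end Labels

section Join

open scoped Classical

variable {V W : Type*} {G : SimpleGraph V} {G' : SimpleGraph W} {v : V} {v' : W}
  {S : Set V} {S' : Set W}

lemma indepSet_joinAt_iff :
    IndepSet (joinAt G G' v v') (Sum.inl '' S ∪ Sum.inr '' S') ↔
      IndepSet G S ∧ IndepSet G' S' ∧ ¬ (v ∈ S ∧ v' ∈ S') := by
  constructor
  · intro h
    refine ⟨fun a ha b hb => h (.inl a) (by simpa using ha) (.inl b) (by simpa using hb),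
      fun a ha b hb => h (.inr a) (by simpa using ha) (.inr b) (by simpa using hb),
      fun ⟨hv, hv'⟩ => h (.inl v) (by simpa using hv) (.inr v') (by simpa using hv') ⟨rfl, rfl⟩⟩
  · rintro ⟨hS, hS', hvv'⟩ (a | a) ha (b | b) hb hab <;> simp only [mem_union, mem_image,
      Sum.inl.injEq, Sum.inr.injEq, reduceCtorEq, exists_eq_right, and_false, exists_false,
      or_false, false_or] at ha hb
    · exact hS a ha b hb hab
    · exact hvv' ⟨hab.1 ▸ ha, hab.2 ▸ hb⟩
    · exact hvv' ⟨hab.2 ▸ hb, hab.1 ▸ ha⟩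
    · exact hS' a ha b hb hab

lemma ncard_inter_joinAt_neighborSet_inl [Finite V] (u : V) :
    ((Sum.inl '' S ∪ Sum.inr '' S') ∩ (joinAt G G' v v').neighborSet (.inl u)).ncard =
      (S ∩ G.neighborSet u).ncard + if u = v ∧ v' ∈ S' then 1 else 0 := by
  split_ifs with h
  · obtain ⟨rfl, hv'⟩ := h
    have : (Sum.inl '' S ∪ Sum.inr '' S') ∩ (joinAt G G' u v').neighborSet (.inl u) =
        insert (.inr v') (Sum.inl '' (S ∩ G.neighborSet u)) := by
      ext (x | x) <;> simp +contextual [joinAt, hv']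
    rw [this, ncard_insert_of_notMem (by simp), ncard_image_of_injective _ Sum.inl_injective]
  · have : (Sum.inl '' S ∪ Sum.inr '' S') ∩ (joinAt G G' v v').neighborSet (.inl u) =
        Sum.inl '' (S ∩ G.neighborSet u) := by
      ext (x | x) <;> aesop (add norm joinAt)
    rw [this, ncard_image_of_injective _ Sum.inl_injective, add_zero]

lemma ncard_inter_joinAt_neighborSet_inr [Finite W] (u : W) :
    ((Sum.inl '' S ∪ Sum.inr '' S') ∩ (joinAt G G' v v').neighborSet (.inr u)).ncard =
      (S' ∩ G'.neighborSet u).ncard + if u = v' ∧ v ∈ S then 1 else 0 := by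
  split_ifs with h
  · obtain ⟨rfl, hv⟩ := h
    have : (Sum.inl '' S ∪ Sum.inr '' S') ∩ (joinAt G G' v u).neighborSet (.inr u) =
        insert (.inl v) (Sum.inr '' (S' ∩ G'.neighborSet u)) := by
      ext (x | x) <;> simp +contextual [joinAt, hv]
    rw [this, ncard_insert_of_notMem (by simp), ncard_image_of_injective _ Sum.inr_injective]
  · have : (Sum.inl '' S ∪ Sum.inr '' S') ∩ (joinAt G G' v v').neighborSet (.inr u) =
        Sum.inr '' (S' ∩ G'.neighborSet u) := by
      ext (x | x) <;> aesop (add norm joinAt)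
    rw [this, ncard_image_of_injective _ Sum.inr_injective, add_zero]

lemma TypeISet.hasLabel_pairs_iff [Finite W] (hS' : TypeISet G' v' S') :
    (HasLabel G v S 0 ∧ HasLabel G' v' S' (-2)) ∨
        (HasLabel G v S 0 ∧ HasLabel G' v' S' (-1)) ∨
        (HasLabel G v S 1 ∧ HasLabel G' v' S' 1) ∨
        (HasLabel G v S 2 ∧ HasLabel G' v' S' 1) ↔
      v' ∉ S' ∧ (S' ∩ G'.neighborSet v').ncard + (if v ∈ S then 1 else 0) = 1 ∧
        (v ∉ S → 1 ≤ (S ∩ G.neighborSet v).ncard ∧ (S ∩ G.neighborSet v).ncard ≤ 2) := by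
  rw [← or_assoc, ← and_or_left, ← or_and_right, hS'.hasLabel_neg_two_or_neg_one_iff,
    hasLabel_zero_iff, ← ncard_eq_zero]
  simp only [hasLabel_iff_of_pos one_pos, hasLabel_iff_of_pos two_pos]
  grind

lemma typeISet_joinAt_inr_and_hasLabel_one_iff_ncard [Finite V] [Finite W] :
    TypeISet (joinAt G G' v v') (.inr v') (Sum.inl '' S ∪ Sum.inr '' S') ∧
        HasLabel (joinAt G G' v v') (.inr v') (Sum.inl '' S ∪ Sum.inr '' S') 1 ↔
      TypeISet G v S ∧ TypeISet G' v' S' ∧ v' ∉ S' ∧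
        (S' ∩ G'.neighborSet v').ncard + (if v ∈ S then 1 else 0) = 1 ∧
        (v ∉ S → 1 ≤ (S ∩ G.neighborSet v).ncard ∧ (S ∩ G.neighborSet v).ncard ≤ 2) := by
  have hv'U : Sum.inr v' ∈ Sum.inl '' S ∪ Sum.inr '' S' ↔ v' ∈ S' := by simp
  rw [TypeISet, hasLabel_iff_of_pos one_pos, indepSet_joinAt_iff,
    ncard_inter_joinAt_neighborSet_inr, hv'U]
  simp only [true_and]
  constructor
  · rintro ⟨⟨⟨hS, hS', -⟩, hcount, -⟩, hv', hc⟩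
    have hcountG (u : V) (hu : u ∉ S) :
        1 ≤ (S ∩ G.neighborSet u).ncard ∧ (S ∩ G.neighborSet u).ncard ≤ 2 := by
      simpa [ncard_inter_joinAt_neighborSet_inl, hv'] using
        hcount (.inl u) (by simpa using hu) (by simp)
    have hcountG' (u : W) (hu : u ∉ S') (hne : u ≠ v') :
        1 ≤ (S' ∩ G'.neighborSet u).ncard ∧ (S' ∩ G'.neighborSet u).ncard ≤ 2 := by
      simpa [ncard_inter_joinAt_neighborSet_inr, hne] using
        hcount (.inr u) (by simpa using hu) (by simpa using hne)
    obtain ⟨hSv, hv⟩ := typeISet_and_ncard_bounds_iff.2 ⟨hS, hcountG⟩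
    exact ⟨hSv, ⟨hS', hcountG', Or.inr (by omega)⟩, hv', by omega, hv⟩
  · rintro ⟨hSv, hS', hv', hc, hv⟩
    obtain ⟨hS, hcountG⟩ := typeISet_and_ncard_bounds_iff.1 ⟨hSv, hv⟩
    refine ⟨⟨⟨hS, hS'.1, fun h => hv' h.2⟩, ?_, Or.inr (by omega)⟩, hv', by omega⟩
    rintro (u | u) hu hne
    · rw [ncard_inter_joinAt_neighborSet_inl, if_neg fun h => hv' h.2, add_zero]
      exact hcountG u (by simpa using hu)
    · rw [ncard_inter_joinAt_neighborSet_inr, if_neg fun h => hne (congrArg _ h.1), add_zero]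
      exact hS'.2.1 u (by simpa using hu) fun h => hne (congrArg _ h)

lemma typeISet_joinAt_inr_and_hasLabel_one_iff [Finite V] [Finite W] :
    TypeISet (joinAt G G' v v') (.inr v') (Sum.inl '' S ∪ Sum.inr '' S') ∧
        HasLabel (joinAt G G' v v') (.inr v') (Sum.inl '' S ∪ Sum.inr '' S') 1 ↔
      TypeISet G v S ∧ TypeISet G' v' S' ∧
        ((HasLabel G v S 0 ∧ HasLabel G' v' S' (-2)) ∨
          (HasLabel G v S 0 ∧ HasLabel G' v' S' (-1)) ∨
          (HasLabel G v S 1 ∧ HasLabel G' v' S' 1) ∨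
          (HasLabel G v S 2 ∧ HasLabel G' v' S' 1)) := by
  rw [typeISet_joinAt_inr_and_hasLabel_one_iff_ncard]
  exact and_congr_right fun _ => and_congr_right fun hS' => hS'.hasLabel_pairs_iff.symm

end Join

theorem statement18_general {V W : Type*} [Fintype V] [Fintype W]
    (G : SimpleGraph V) (G' : SimpleGraph W) (v : V) (v' : W) :
    (∀ S'' : Set (V ⊕ W),
      (TypeISet (joinAt G G' v v') (Sum.inr v') S'' ∧
          HasLabel (joinAt G G' v v') (Sum.inr v') S'' 1) ↔
        ∃ (S : Set V) (S' : Set W), S = Sum.inl ⁻¹' S'' ∧ S' = Sum.inr ⁻¹' S'' ∧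
          S'' = Sum.inl '' S ∪ Sum.inr '' S' ∧ TypeISet G v S ∧ TypeISet G' v' S' ∧
          ((HasLabel G v S 0 ∧ HasLabel G' v' S' (-2)) ∨
           (HasLabel G v S 0 ∧ HasLabel G' v' S' (-1)) ∨
           (HasLabel G v S 1 ∧ HasLabel G' v' S' 1) ∨
           (HasLabel G v S 2 ∧ HasLabel G' v' S' 1))) ∧
    (∀ (R : Set V) (S' : Set W), TypeISet G v R → HasLabel G v R (-1) →
      TypeISet G' v' S' →
      (HasLabel G' v' S' (-2) ∨ HasLabel G' v' S' (-1)) →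
      TypeISet (joinAt G G' v v') (Sum.inr v')
          (Sum.inl '' (R ∪ {v}) ∪ Sum.inr '' S') ∧
        HasLabel (joinAt G G' v v') (Sum.inr v')
          (Sum.inl '' (R ∪ {v}) ∪ Sum.inr '' S') 1) := by
  refine ⟨fun S'' => ⟨fun h => ?_, ?_⟩, fun R S' hR hRl hS' hS'l => ?_⟩
  · have hS'' := (image_preimage_inl_union_image_preimage_inr S'').symm
    rw [hS'', typeISet_joinAt_inr_and_hasLabel_one_iff] at h
    exact ⟨_, _, rfl, rfl, hS'', h⟩
  · rintro ⟨S, S', -, -, rfl, h⟩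
    exact typeISet_joinAt_inr_and_hasLabel_one_iff.2 h
  · have hv : HasLabel G v (insert v R) 0 := hasLabel_zero_iff.2 (mem_insert v R)
    rw [union_singleton, typeISet_joinAt_inr_and_hasLabel_one_iff]
    exact ⟨hR.insert_of_hasLabel_neg_one hRl, hS',
      hS'l.elim (fun h => Or.inl ⟨hv, h⟩) fun h => Or.inr (Or.inl ⟨hv, h⟩)⟩

theorem statement18 {V W : Type*} [Fintype V] [Fintype W] [Nontrivial V]
    [Nontrivial W] (G : SimpleGraph V) (G' : SimpleGraph W) (v : V) (v' : W) :
    (∀ S'' : Set (V ⊕ W),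
      (TypeISet (joinAt G G' v v') (Sum.inr v') S'' ∧
          HasLabel (joinAt G G' v v') (Sum.inr v') S'' 1) ↔
        ∃ (S : Set V) (S' : Set W), S = Sum.inl ⁻¹' S'' ∧ S' = Sum.inr ⁻¹' S'' ∧
          S'' = Sum.inl '' S ∪ Sum.inr '' S' ∧ TypeISet G v S ∧ TypeISet G' v' S' ∧
          ((HasLabel G v S 0 ∧ HasLabel G' v' S' (-2)) ∨
           (HasLabel G v S 0 ∧ HasLabel G' v' S' (-1)) ∨
           (HasLabel G v S 1 ∧ HasLabel G' v' S' 1) ∨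
           (HasLabel G v S 2 ∧ HasLabel G' v' S' 1))) ∧
    (∀ (R : Set V) (S' : Set W), TypeISet G v R → HasLabel G v R (-1) →
      TypeISet G' v' S' →
      (HasLabel G' v' S' (-2) ∨ HasLabel G' v' S' (-1)) →
      TypeISet (joinAt G G' v v') (Sum.inr v')
          (Sum.inl '' (R ∪ {v}) ∪ Sum.inr '' S') ∧
        HasLabel (joinAt G G' v v') (Sum.inr v')
          (Sum.inl '' (R ∪ {v}) ∪ Sum.inr '' S') 1) :=
  statement18_general G G' v v'
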